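/- arXiv:math/0601128 — 5 statements merged into one kernel-verified Lean document; each statement's English description precedes it below -/
import Mathlib

section
/- Let S : H1 → H2 and T : H2 → H3 be closed densely defined operators between Hilbert spaces with T ∘ S = 0 (i.e. Ran(S) ⊆ Ker(T)), and suppose the associated Laplacian □ = S S* + T* T (with its natural domain) has a bounded inverse N on H2. Then every u ∈ H2 admits the orthogonal decomposition u = S S* N u + T* T N u, and these two summands are orthogonal. -/
open scoped InnerProductSpace

/-- Hodge decomposition: if the complex Laplacian `□ = S S* + T* T` of a Hilbert complex
has a bounded inverse `N`, then every `u` decomposes orthogonally as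
`u = S S* N u + T* T N u`. -/
theorem stmt1 {H1 H2 H3 : Type*}
    [NormedAddCommGroup H1] [InnerProductSpace ℂ H1] [CompleteSpace H1]
    [NormedAddCommGroup H2] [InnerProductSpace ℂ H2] [CompleteSpace H2]
    [NormedAddCommGroup H3] [InnerProductSpace ℂ H3] [CompleteSpace H3]
    (S : H1 →ₗ.[ℂ] H2) (T : H2 →ₗ.[ℂ] H3)
    (hS_dense : Dense (S.domain : Set H1)) (hT_dense : Dense (T.domain : Set H2))
    (hS_closed : S.IsClosed) (hT_closed : T.IsClosed)
    -- `T ∘ S = 0`, i.e. `Ran(S) ⊆ Ker(T)`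
    (hTS : ∀ x : S.domain, ∃ h : S x ∈ T.domain, T ⟨S x, h⟩ = 0)
    -- `N` is a bounded inverse of `□ = S S* + T* T` (with its natural domain)
    (N : H2 →L[ℂ] H2)
    (hN : ∀ u : H2, ∃ (h1 : N u ∈ S.adjoint.domain) (h2 : N u ∈ T.domain)
      (h3 : S.adjoint ⟨N u, h1⟩ ∈ S.domain) (h4 : T ⟨N u, h2⟩ ∈ T.adjoint.domain),
      S ⟨S.adjoint ⟨N u, h1⟩, h3⟩ + T.adjoint ⟨T ⟨N u, h2⟩, h4⟩ = u) :
    ∀ u : H2, ∃ (h1 : N u ∈ S.adjoint.domain) (h2 : N u ∈ T.domain)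
      (h3 : S.adjoint ⟨N u, h1⟩ ∈ S.domain) (h4 : T ⟨N u, h2⟩ ∈ T.adjoint.domain),
      u = S ⟨S.adjoint ⟨N u, h1⟩, h3⟩ + T.adjoint ⟨T ⟨N u, h2⟩, h4⟩ ∧
      ⟪S ⟨S.adjoint ⟨N u, h1⟩, h3⟩, T.adjoint ⟨T ⟨N u, h2⟩, h4⟩⟫_ℂ = 0 := by
  intro u
  obtain ⟨h1, h2, h3, h4, heq⟩ := hN u
  refine ⟨h1, h2, h3, h4, heq.symm, ?_⟩
  set v : S.domain := ⟨S.adjoint ⟨N u, h1⟩, h3⟩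
  obtain ⟨hTv, hTv0⟩ := hTS v
  have key := T.adjoint_isFormalAdjoint hT_dense ⟨T ⟨N u, h2⟩, h4⟩ ⟨S v, hTv⟩
  rw [hTv0, inner_zero_right] at key
  rw [← inner_conj_symm, key, map_zero]
end

section
/- In the setting of the Hodge decomposition for a Hilbert complex: if □ has bounded inverse N and u ∈ Ker(T), then u = S(S* N u), and moreover ‖S* N u‖² ≤ ‖N‖ · ‖u‖². In particular S* N is a bounded solution operator for the equation S v = u on Ker(T). -/
open scoped InnerProductSpace

/-- If `□ = S S* + T* T` has a bounded inverse `N` and `u ∈ Ker T`, then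
`u = S (S* N u)` and `‖S* N u‖² ≤ ‖N‖ ‖u‖²`, so `S* N` is a bounded solution
operator for `S v = u` on `Ker T`. -/
theorem stmt2 {H1 H2 H3 : Type*}
    [NormedAddCommGroup H1] [InnerProductSpace ℂ H1] [CompleteSpace H1]
    [NormedAddCommGroup H2] [InnerProductSpace ℂ H2] [CompleteSpace H2]
    [NormedAddCommGroup H3] [InnerProductSpace ℂ H3] [CompleteSpace H3]
    (S : H1 →ₗ.[ℂ] H2) (T : H2 →ₗ.[ℂ] H3)
    (hS_dense : Dense (S.domain : Set H1)) (hT_dense : Dense (T.domain : Set H2))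
    (hS_closed : S.IsClosed) (hT_closed : T.IsClosed)
    (hTS : ∀ x : S.domain, ∃ h : S x ∈ T.domain, T ⟨S x, h⟩ = 0)
    (N : H2 →L[ℂ] H2)
    (hN : ∀ u : H2, ∃ (h1 : N u ∈ S.adjoint.domain) (h2 : N u ∈ T.domain)
      (h3 : S.adjoint ⟨N u, h1⟩ ∈ S.domain) (h4 : T ⟨N u, h2⟩ ∈ T.adjoint.domain),
      S ⟨S.adjoint ⟨N u, h1⟩, h3⟩ + T.adjoint ⟨T ⟨N u, h2⟩, h4⟩ = u) :
    ∀ (u : H2) (hu : u ∈ T.domain), T ⟨u, hu⟩ = 0 →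
      ∃ (h1 : N u ∈ S.adjoint.domain) (h3 : S.adjoint ⟨N u, h1⟩ ∈ S.domain),
        S ⟨S.adjoint ⟨N u, h1⟩, h3⟩ = u ∧
        ‖(S.adjoint ⟨N u, h1⟩ : H1)‖ ^ 2 ≤ ‖N‖ * ‖u‖ ^ 2 := by
  intro u hu huT
  obtain ⟨h1, h2, h3, h4, heq⟩ := hN u
  refine ⟨h1, h3, ?_⟩
  obtain ⟨hmem, hTsa⟩ := hTS ⟨S.adjoint ⟨N u, h1⟩, h3⟩
  set v : H2 := T.adjoint ⟨T ⟨N u, h2⟩, h4⟩ with hv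
  have hveq : v = u - S ⟨S.adjoint ⟨N u, h1⟩, h3⟩ := by
    rw [eq_sub_iff_add_eq, add_comm]; exact heq
  have hvmem : v ∈ T.domain := hveq ▸ T.domain.sub_mem hu hmem
  have hTv : T ⟨v, hvmem⟩ = 0 := by
    have hsub : (⟨v, hvmem⟩ : T.domain) = ⟨u, hu⟩ - ⟨S ⟨S.adjoint ⟨N u, h1⟩, h3⟩, hmem⟩ := by
      ext; simp [hveq]
    rw [hsub, T.map_sub, huT, hTsa, sub_zero]
  have hfa := LinearPMap.adjoint_isFormalAdjoint hT_dense
  have hv0 : v = 0 := by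
    have h := hfa ⟨T ⟨N u, h2⟩, h4⟩ ⟨v, hvmem⟩
    rw [hTv, inner_zero_right] at h
    exact inner_self_eq_zero.mp h
  have hmain : S ⟨S.adjoint ⟨N u, h1⟩, h3⟩ = u := by
    rw [hv0, add_zero] at heq; exact heq
  refine ⟨hmain, ?_⟩
  have hfaS := LinearPMap.adjoint_isFormalAdjoint hS_dense
  have h := hfaS ⟨N u, h1⟩ ⟨S.adjoint ⟨N u, h1⟩, h3⟩
  rw [hmain] at h
  have key : ‖(S.adjoint ⟨N u, h1⟩ : H1)‖ ^ 2
      = RCLike.re ⟪(N u : H2), u⟫_ℂ := by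
    rw [← inner_self_eq_norm_sq (𝕜 := ℂ)]
    exact congrArg RCLike.re h
  rw [key]
  calc RCLike.re ⟪(N u : H2), u⟫_ℂ ≤ ‖⟪(N u : H2), u⟫_ℂ‖ := RCLike.re_le_norm _
    _ ≤ ‖N u‖ * ‖u‖ := norm_inner_le_norm _ _
    _ ≤ (‖N‖ * ‖u‖) * ‖u‖ := by gcongr; exact N.le_opNorm u
    _ = ‖N‖ * ‖u‖ ^ 2 := by ring
end

section
/- The canonical solution: in the setting above, for u ∈ Ker(T), the element v = S* N u is the unique solution of S v = u that is orthogonal to Ker(S); equivalently, it is the solution of minimal norm. -/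
open scoped InnerProductSpace

/-- The canonical solution: for `u ∈ Ker T`, the element `v = S* N u` is the unique
solution of `S v = u` orthogonal to `Ker S`, and it is the solution of minimal norm. -/
theorem stmt3 {H1 H2 H3 : Type*}
    [NormedAddCommGroup H1] [InnerProductSpace ℂ H1] [CompleteSpace H1]
    [NormedAddCommGroup H2] [InnerProductSpace ℂ H2] [CompleteSpace H2]
    [NormedAddCommGroup H3] [InnerProductSpace ℂ H3] [CompleteSpace H3]
    (S : H1 →ₗ.[ℂ] H2) (T : H2 →ₗ.[ℂ] H3)
    (hS_dense : Dense (S.domain : Set H1)) (hT_dense : Dense (T.domain : Set H2))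
    (hS_closed : S.IsClosed) (hT_closed : T.IsClosed)
    (hTS : ∀ x : S.domain, ∃ h : S x ∈ T.domain, T ⟨S x, h⟩ = 0)
    (N : H2 →L[ℂ] H2)
    (hN : ∀ u : H2, ∃ (h1 : N u ∈ S.adjoint.domain) (h2 : N u ∈ T.domain)
      (h3 : S.adjoint ⟨N u, h1⟩ ∈ S.domain) (h4 : T ⟨N u, h2⟩ ∈ T.adjoint.domain),
      S ⟨S.adjoint ⟨N u, h1⟩, h3⟩ + T.adjoint ⟨T ⟨N u, h2⟩, h4⟩ = u) :
    ∀ (u : H2) (hu : u ∈ T.domain), T ⟨u, hu⟩ = 0 →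
      ∃ (h1 : N u ∈ S.adjoint.domain) (h3 : S.adjoint ⟨N u, h1⟩ ∈ S.domain),
        -- `v := S* N u` solves `S v = u`
        S ⟨S.adjoint ⟨N u, h1⟩, h3⟩ = u ∧
        -- `v` is orthogonal to `Ker S`
        (∀ k : S.domain, S k = 0 → ⟪(S.adjoint ⟨N u, h1⟩ : H1), (k : H1)⟫_ℂ = 0) ∧
        -- `v` is the unique solution orthogonal to `Ker S`
        (∀ w : S.domain, S w = u →
          (∀ k : S.domain, S k = 0 → ⟪(w : H1), (k : H1)⟫_ℂ = 0) →
          (w : H1) = (S.adjoint ⟨N u, h1⟩ : H1)) ∧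
        -- `v` has minimal norm among all solutions
        (∀ w : S.domain, S w = u →
          ‖(S.adjoint ⟨N u, h1⟩ : H1)‖ ≤ ‖(w : H1)‖) := by
  intro u hu hTu
  obtain ⟨h1, h2, h3, h4, hdecomp⟩ := hN u
  -- the element v
  set v : S.domain := ⟨S.adjoint ⟨N u, h1⟩, h3⟩ with hv
  -- S v ∈ Ker T
  obtain ⟨hmem, hSvker⟩ := hTS v
  -- a := T† (T N u)
  set a : H2 := T.adjoint ⟨T ⟨N u, h2⟩, h4⟩ with ha
  have hSv : S v + a = u := hdecomp
  have haeq : a = u - S v := by rw [← hSv]; abel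
  have haDom : a ∈ T.domain := haeq ▸ sub_mem hu hmem
  have hTa : T ⟨a, haDom⟩ = 0 := by
    have : (⟨a, haDom⟩ : T.domain) = ⟨u, hu⟩ - ⟨S v, hmem⟩ := by
      ext; simp [haeq]
    rw [this, T.map_sub, hTu, hSvker, sub_zero]
  have ha0 : a = 0 := by
    have hip : ⟪a, a⟫_ℂ = 0 := by
      have := T.adjoint_isFormalAdjoint hT_dense ⟨T ⟨N u, h2⟩, h4⟩ ⟨a, haDom⟩
      rw [hTa, inner_zero_right] at this
      exact this
    exact inner_self_eq_zero.mp hip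
  have hsol : S v = u := by rw [← hSv, ha0, add_zero]
  -- orthogonality of v to Ker S
  have horth : ∀ k : S.domain, S k = 0 → ⟪(v : H1), (k : H1)⟫_ℂ = 0 := by
    intro k hk
    have := S.adjoint_isFormalAdjoint hS_dense ⟨N u, h1⟩ k
    rw [hk, inner_zero_right] at this
    exact this
  refine ⟨h1, h3, hsol, horth, ?_, ?_⟩
  · -- uniqueness
    intro w hw hworth
    have hd : S (w - v) = 0 := by rw [S.map_sub, hw, hsol, sub_self]
    have h1' : ⟪(w : H1), ((w - v : S.domain) : H1)⟫_ℂ = 0 := hworth _ hd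
    have h2' : ⟪(v : H1), ((w - v : S.domain) : H1)⟫_ℂ = 0 := horth _ hd
    have : ⟪((w - v : S.domain) : H1), ((w - v : S.domain) : H1)⟫_ℂ = 0 := by
      have : ((w - v : S.domain) : H1) = (w : H1) - (v : H1) := rfl
      rw [this, inner_sub_left]
      rw [this] at h1' h2'
      rw [h1', h2', sub_zero]
    have hz : ((w - v : S.domain) : H1) = 0 := inner_self_eq_zero.mp this
    exact sub_eq_zero.mp hz
  · -- minimality
    intro w hw
    show ‖(v : H1)‖ ≤ ‖(w : H1)‖
    have hd : S (w - v) = 0 := by rw [S.map_sub, hw, hsol, sub_self]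
    have h2' : ⟪(v : H1), ((w - v : S.domain) : H1)⟫_ℂ = 0 := horth _ hd
    have hco : ((w - v : S.domain) : H1) = (w : H1) - (v : H1) := rfl
    rw [hco] at h2'
    have hpyth : ‖(w : H1)‖ ^ 2 = ‖(v : H1)‖ ^ 2 + ‖(w : H1) - (v : H1)‖ ^ 2 := by
      have := norm_add_sq (𝕜 := ℂ) (v : H1) ((w : H1) - (v : H1))
      simp only [h2', map_zero, mul_zero, add_zero] at this
      have harr : (v : H1) + ((w : H1) - (v : H1)) = (w : H1) := by abel
      rw [harr] at this
      linarith [this]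
    nlinarith [norm_nonneg ((w : H1) - (v : H1)), norm_nonneg (w : H1), norm_nonneg (v : H1)]
end

section
/- Compactness criterion: Let S : Dom(S) ⊆ H1 → H2 be a bounded (or closed densely defined) operator between Hilbert spaces, and let K be a closed subspace of H1 contained in Dom(S). Suppose that for every ε > 0 there exists a Hilbert space H_ε and a compact operator R_ε : H1 → H_ε such that ‖u‖² ≤ ε ‖S u‖² + ‖R_ε u‖² for all u ∈ K, and suppose S restricted to K has a bounded left inverse (i.e. ‖u‖ ≤ C ‖S u‖ on K). Then any bounded solution operator for S on S(K) mapping back into K ∩ Ker-complement is compact; in particular, if S is injective on K with closed range, then S⁻¹ : S(K) → K is compact. -/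
/-- Compactness criterion: if for every `ε > 0` there are a Hilbert space `Hε` and a
compact operator `Rε : H1 → Hε` with `‖u‖² ≤ ε ‖S u‖² + ‖Rε u‖²` on the closed
subspace `K`, and `‖u‖ ≤ C ‖S u‖` on `K`, then the inverse `S⁻¹ : S(K) → K` is
compact, i.e. the preimage of the unit ball of `S(K)` is relatively compact in `K`. -/
theorem stmt4 {H1 H2 : Type u}
    [NormedAddCommGroup H1] [InnerProductSpace ℂ H1] [CompleteSpace H1]
    [NormedAddCommGroup H2] [InnerProductSpace ℂ H2] [CompleteSpace H2]
    (S : H1 →L[ℂ] H2) (K : Submodule ℂ H1) (hK : IsClosed (K : Set H1))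
    (hest : ∀ ε > (0 : ℝ), ∃ (Hε : Type u) (_ : NormedAddCommGroup Hε)
      (_ : InnerProductSpace ℂ Hε) (_ : CompleteSpace Hε) (Rε : H1 →L[ℂ] Hε),
      IsCompactOperator Rε ∧
      ∀ u ∈ K, ‖u‖ ^ 2 ≤ ε * ‖S u‖ ^ 2 + ‖Rε u‖ ^ 2)
    (C : ℝ) (hC : ∀ u ∈ K, ‖u‖ ≤ C * ‖S u‖) :
    IsCompact (closure {u : H1 | u ∈ K ∧ ‖S u‖ ≤ 1}) := by
  set s : Set H1 := {u : H1 | u ∈ K ∧ ‖S u‖ ≤ 1} with hs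
  -- it suffices to show `s` is totally bounded
  refine TotallyBounded.isCompact_of_isClosed ?_ isClosed_closure
  refine TotallyBounded.closure ?_
  -- `s` is bounded
  have hsb : Bornology.IsBounded s := by
    apply isBounded_iff_forall_norm_le.2 ⟨|C|, ?_⟩
    rintro u ⟨huK, huS⟩
    calc ‖u‖ ≤ C * ‖S u‖ := hC u huK
      _ ≤ |C| * ‖S u‖ := by
          exact mul_le_mul_of_nonneg_right (le_abs_self C) (norm_nonneg _)
      _ ≤ |C| * 1 := by
          exact mul_le_mul_of_nonneg_left huS (abs_nonneg C)
      _ = |C| := mul_one _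
  rw [Metric.totallyBounded_iff]
  intro δ hδ
  obtain ⟨Hε, _, _, _, R, hRc, hRe⟩ := hest (δ ^ 2 / 8) (by positivity)
  -- the image `R '' s` is totally bounded
  have himg : TotallyBounded (R '' s) :=
    (hRc.isCompact_closure_image_of_bounded hsb).totallyBounded.subset subset_closure
  obtain ⟨t, hts, htf, htc⟩ := totallyBounded_iff_subset.1 himg
      {p : Hε × Hε | dist p.1 p.2 < δ / 2} (Metric.dist_mem_uniformity (by positivity))
  -- choose preimages of the centers
  have hch : ∀ y ∈ t, ∃ u, u ∈ s ∧ R u = y := by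
    intro y hy
    obtain ⟨u, hu, hru⟩ := hts hy
    exact ⟨u, hu, hru⟩
  choose! f hf1 hf2 using hch
  refine ⟨f '' t, htf.image f, ?_⟩
  intro u hu
  obtain ⟨y, hy, hxy⟩ := Set.mem_iUnion₂.1 (htc ⟨u, hu, rfl⟩)
  refine Set.mem_iUnion₂.2 ⟨f y, Set.mem_image_of_mem f hy, ?_⟩
  -- estimate `‖u - f y‖`
  obtain ⟨huK, huS⟩ := hu
  obtain ⟨hfK, hfS⟩ := hf1 y hy
  have hmem : u - f y ∈ K := sub_mem huK hfK
  have hR : ‖R (u - f y)‖ < δ / 2 := by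
    have : dist (R u) y < δ / 2 := hxy
    rw [← hf2 y hy] at this
    simpa [map_sub, dist_eq_norm] using this
  have hS2 : ‖S (u - f y)‖ ≤ 2 := by
    calc ‖S (u - f y)‖ = ‖S u - S (f y)‖ := by rw [map_sub]
      _ ≤ ‖S u‖ + ‖S (f y)‖ := norm_sub_le _ _
      _ ≤ 1 + 1 := add_le_add huS hfS
      _ = 2 := by norm_num
  have hest2 := hRe (u - f y) hmem
  have hlt : ‖u - f y‖ ^ 2 < δ ^ 2 := by
    have h1 : (δ ^ 2 / 8) * ‖S (u - f y)‖ ^ 2 ≤ (δ ^ 2 / 8) * 4 := by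
      apply mul_le_mul_of_nonneg_left _ (by positivity)
      calc ‖S (u - f y)‖ ^ 2 ≤ 2 ^ 2 := by
            exact pow_le_pow_left₀ (norm_nonneg _) hS2 2
        _ = 4 := by norm_num
    have h2 : ‖R (u - f y)‖ ^ 2 < (δ / 2) ^ 2 :=
      pow_lt_pow_left₀ hR (norm_nonneg _) (by norm_num)
    nlinarith [hest2]
  have : ‖u - f y‖ < δ := by
    nlinarith [norm_nonneg (u - f y)]
  simpa [Metric.mem_ball, dist_eq_norm] using this
end

section
/- Percolation of compactness: In the Hilbert complex H1 →^S H2 →^T H3 →^R H4 (closed densely defined operators, consecutive compositions zero), suppose both Laplacians □₂ = S S* + T* T on H2 and □₃ = T T* + R* R on H3 have bounded inverses N₂ and N₃. If N₂ is compact, then the canonical solution operator T* N₃ : H3 → H2 restricted to Ker(R) ∩ Ran(T)-closure is compact. -/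
/-!
Testing `□₂ N₂ w = w` against `N₂ w` gives `‖S* N₂ w‖² + ‖T N₂ w‖² = Re ⟪w, N₂ w⟫`, so
`B = T N₂` satisfies `‖B w‖² ≤ ‖w‖ ‖N₂ w‖` and is compact along with `N₂`; hence so is `B*`.
For `v ∈ ker R`, the term `R* R N₃ v` of `□₃ N₃ v = v` lies in `ran R* ∩ ker R = 0`, so
`T (T* N₃ v) = v`. Pairing `T* N₃ v` with `w = □₂ N₂ w` (and using `T S = 0`) then shows
`T* N₃ v = B* v`, so the solution operator is compact on `ker R`.
-/

open scoped InnerProductSpace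

theorem totallyBounded_image_of_dist_lt {α β γ : Type*} [PseudoMetricSpace β]
    [PseudoMetricSpace γ] {f : α → β} {g : α → γ} {s : Set α} (hg : TotallyBounded (g '' s))
    (hfg : ∀ ε > 0, ∃ δ > 0, ∀ x ∈ s, ∀ y ∈ s, dist (g x) (g y) < δ → dist (f x) (f y) < ε) :
    TotallyBounded (f '' s) := by
  rw [Metric.totallyBounded_iff]
  intro ε hε
  obtain ⟨δ, hδ, hfg⟩ := hfg ε hε
  obtain ⟨t, hts, htf, hcov⟩ :=
    Set.exists_subset_image_finite_and.1 (Metric.finite_approx_of_totallyBounded hg δ hδ)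
  refine ⟨f '' t, htf.image f, ?_⟩
  rintro _ ⟨x, hx, rfl⟩
  obtain ⟨_, ⟨y, hy, rfl⟩, hxy⟩ := Set.mem_iUnion₂.1 (hcov ⟨x, hx, rfl⟩)
  exact Set.mem_iUnion₂.2 ⟨f y, ⟨y, hy, rfl⟩, hfg x hx y (hts hy) hxy⟩

theorem IsCompactOperator.of_sq_norm_le {𝕜 E F G : Type*} [NontriviallyNormedField 𝕜]
    [SeminormedAddCommGroup E] [NormedSpace 𝕜 E]
    [NormedAddCommGroup F] [NormedSpace 𝕜 F] [CompleteSpace F]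
    [NormedAddCommGroup G] [NormedSpace 𝕜 G]
    {A : E →ₗ[𝕜] F} (M : E →ₗ[𝕜] G) (hM : IsCompactOperator M)
    (h : ∀ x, ‖A x‖ ^ 2 ≤ ‖x‖ * ‖M x‖) : IsCompactOperator A := by
  rw [isCompactOperator_iff_isCompact_closure_image_ball A one_pos]
  refine TotallyBounded.isCompact_of_isClosed (TotallyBounded.closure ?_) isClosed_closure
  refine totallyBounded_image_of_dist_lt
    ((hM.isCompact_closure_image_ball 1).totallyBounded.subset subset_closure) fun ε hε => ?_
  refine ⟨ε ^ 2 / 2, by positivity, fun x hx y hy hxy => ?_⟩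
  rw [dist_eq_norm, ← map_sub] at hxy ⊢
  rw [mem_ball_zero_iff] at hx hy
  have hxy_le : ‖x - y‖ ≤ 2 := by linarith [norm_sub_le x y]
  refine lt_of_pow_lt_pow_left₀ 2 hε.le ?_
  calc ‖A (x - y)‖ ^ 2 ≤ ‖x - y‖ * ‖M (x - y)‖ := h (x - y)
    _ ≤ 2 * ‖M (x - y)‖ := by gcongr
    _ < ε ^ 2 := by linarith

theorem IsCompactOperator.adjoint {𝕜 E F : Type*} [RCLike 𝕜]
    [NormedAddCommGroup E] [InnerProductSpace 𝕜 E] [CompleteSpace E]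
    [NormedAddCommGroup F] [InnerProductSpace 𝕜 F] [CompleteSpace F]
    {B : E →L[𝕜] F} (hB : IsCompactOperator B) : IsCompactOperator B.adjoint := by
  refine IsCompactOperator.of_sq_norm_le (B ∘L B.adjoint : F →ₗ[𝕜] F) (hB.comp_clm _)
    fun y => ?_
  calc ‖B.adjoint y‖ ^ 2 = RCLike.re ⟪B.adjoint y, B.adjoint y⟫_𝕜 := norm_sq_eq_re_inner _
    _ = RCLike.re ⟪y, B (B.adjoint y)⟫_𝕜 := by rw [ContinuousLinearMap.adjoint_inner_left]
    _ ≤ ‖y‖ * ‖B (B.adjoint y)‖ := re_inner_le_norm _ _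

namespace LinearPMap

section Kernel

variable {R E F : Type*} [Ring R] [AddCommGroup E] [Module R E] [AddCommGroup F] [Module R F]

def ker (f : E →ₗ.[R] F) : Submodule R E :=
  (LinearMap.ker f.toFun).map f.domain.subtype

theorem mem_ker {f : E →ₗ.[R] F} {x : E} : x ∈ f.ker ↔ ∃ h : x ∈ f.domain, f ⟨x, h⟩ = 0 := by
  simp [ker]

end Kernel

variable {𝕜 E₁ E₂ E₃ : Type*} [RCLike 𝕜]
  [NormedAddCommGroup E₁] [InnerProductSpace 𝕜 E₁]
  [NormedAddCommGroup E₂] [InnerProductSpace 𝕜 E₂]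
  [NormedAddCommGroup E₃] [InnerProductSpace 𝕜 E₃]

theorem IsFormalAdjoint.inner_apply_apply_self {T : E₂ →ₗ.[𝕜] E₁} {S : E₁ →ₗ.[𝕜] E₂}
    (h : T.IsFormalAdjoint S) (x : S.domain) (hx : S x ∈ T.domain) :
    ⟪T ⟨S x, hx⟩, (x : E₁)⟫_𝕜 = (‖S x‖ ^ 2 : 𝕜) := by
  rw [h ⟨S x, hx⟩ x, inner_self_eq_norm_sq_to_K]

variable [CompleteSpace E₁]

theorem adjoint_apply_eq_zero_of_mem_ker {T : E₁ →ₗ.[𝕜] E₂} (hT : Dense (T.domain : Set E₁))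
    (y : T.adjoint.domain) (hy : T.adjoint y ∈ T.ker) : T.adjoint y = 0 := by
  obtain ⟨hdom, hzero⟩ := mem_ker.1 hy
  have h := adjoint_isFormalAdjoint hT y ⟨T.adjoint y, hdom⟩
  rw [hzero, inner_zero_right] at h
  exact inner_self_eq_zero.1 h

variable [CompleteSpace E₂]

/-- `x` is in the domain of `□ = S S* + T* T` and `□ x = u`. -/
def HasLaplacian (S : E₁ →ₗ.[𝕜] E₂) (T : E₂ →ₗ.[𝕜] E₃) (x u : E₂) : Prop :=
  ∃ (h1 : x ∈ S.adjoint.domain) (h2 : x ∈ T.domain)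
    (h3 : S.adjoint ⟨x, h1⟩ ∈ S.domain) (h4 : T ⟨x, h2⟩ ∈ T.adjoint.domain),
    S ⟨S.adjoint ⟨x, h1⟩, h3⟩ + T.adjoint ⟨T ⟨x, h2⟩, h4⟩ = u

namespace HasLaplacian

variable {S : E₁ →ₗ.[𝕜] E₂} {T : E₂ →ₗ.[𝕜] E₃} {x u : E₂}

theorem mem_domain (h : HasLaplacian S T x u) : x ∈ T.domain :=
  h.2.1

theorem norm_sq_le (hS : Dense (S.domain : Set E₁)) (hT : Dense (T.domain : Set E₂))
    (h : HasLaplacian S T x u) : ‖T ⟨x, h.mem_domain⟩‖ ^ 2 ≤ ‖u‖ * ‖x‖ := by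
  obtain ⟨h1, h2, h3, h4, rfl⟩ := h
  have henergy : RCLike.re ⟪S ⟨S.adjoint ⟨x, h1⟩, h3⟩ + T.adjoint ⟨T ⟨x, h2⟩, h4⟩, x⟫_𝕜 =
      ‖S.adjoint ⟨x, h1⟩‖ ^ 2 + ‖T ⟨x, h2⟩‖ ^ 2 := by
    rw [inner_add_left,
      (adjoint_isFormalAdjoint hS).symm.inner_apply_apply_self ⟨x, h1⟩ h3,
      (adjoint_isFormalAdjoint hT).inner_apply_apply_self ⟨x, h2⟩ h4]
    norm_cast
  nlinarith [re_inner_le_norm (𝕜 := 𝕜)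
    (S ⟨S.adjoint ⟨x, h1⟩, h3⟩ + T.adjoint ⟨T ⟨x, h2⟩, h4⟩) x, sq_nonneg ‖S.adjoint ⟨x, h1⟩‖]

theorem inner_adjoint_apply (hT : Dense (T.domain : Set E₂))
    (hTS : ∀ z : S.domain, S z ∈ T.ker) (h : HasLaplacian S T x u)
    (y : T.adjoint.domain) (hy : T.adjoint y ∈ T.domain) :
    ⟪T.adjoint y, u⟫_𝕜 = ⟪T ⟨T.adjoint y, hy⟩, T ⟨x, h.mem_domain⟩⟫_𝕜 := by
  obtain ⟨h1, h2, h3, h4, rfl⟩ := h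
  obtain ⟨hdom, hzero⟩ := mem_ker.1 (hTS ⟨S.adjoint ⟨x, h1⟩, h3⟩)
  rw [inner_add_right, adjoint_isFormalAdjoint hT y ⟨_, hdom⟩, hzero, inner_zero_right,
    zero_add, (adjoint_isFormalAdjoint hT).symm ⟨T.adjoint y, hy⟩ ⟨T ⟨x, h2⟩, h4⟩]

theorem apply_adjoint_apply_eq_of_mem_ker (hT : Dense (T.domain : Set E₂))
    (hTS : ∀ z : S.domain, S z ∈ T.ker) (h : HasLaplacian S T x u) (hu : u ∈ T.ker)
    (h1 : x ∈ S.adjoint.domain) (h3 : S.adjoint ⟨x, h1⟩ ∈ S.domain) :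
    S ⟨S.adjoint ⟨x, h1⟩, h3⟩ = u := by
  obtain ⟨_, h2, _, h4, hx⟩ := h
  have hker : T.adjoint ⟨T ⟨x, h2⟩, h4⟩ ∈ T.ker := by
    rw [eq_sub_of_add_eq' hx]
    exact sub_mem hu (hTS _)
  rwa [adjoint_apply_eq_zero_of_mem_ker hT _ hker, add_zero] at hx

end HasLaplacian

end LinearPMap

theorem stmt12_general {H1 H2 H3 H4 : Type*}
    [NormedAddCommGroup H1] [InnerProductSpace ℂ H1] [CompleteSpace H1]
    [NormedAddCommGroup H2] [InnerProductSpace ℂ H2] [CompleteSpace H2]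
    [NormedAddCommGroup H3] [InnerProductSpace ℂ H3] [CompleteSpace H3]
    [NormedAddCommGroup H4] [InnerProductSpace ℂ H4] [CompleteSpace H4]
    (S : H1 →ₗ.[ℂ] H2) (T : H2 →ₗ.[ℂ] H3) (R : H3 →ₗ.[ℂ] H4)
    (hS_dense : Dense (S.domain : Set H1)) (hT_dense : Dense (T.domain : Set H2))
    (hR_dense : Dense (R.domain : Set H3))
    (hTS : ∀ x : S.domain, ∃ h : S x ∈ T.domain, T ⟨S x, h⟩ = 0)
    (hRT : ∀ x : T.domain, ∃ h : T x ∈ R.domain, R ⟨T x, h⟩ = 0)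
    (N2 : H2 →L[ℂ] H2) (N3 : H3 →L[ℂ] H3)
    -- `N₂` is a bounded inverse of `□₂ = S S* + T* T`
    (hN2 : ∀ u : H2, ∃ (h1 : N2 u ∈ S.adjoint.domain) (h2 : N2 u ∈ T.domain)
      (h3 : S.adjoint ⟨N2 u, h1⟩ ∈ S.domain) (h4 : T ⟨N2 u, h2⟩ ∈ T.adjoint.domain),
      S ⟨S.adjoint ⟨N2 u, h1⟩, h3⟩ + T.adjoint ⟨T ⟨N2 u, h2⟩, h4⟩ = u)
    -- `N₃` is a bounded inverse of `□₃ = T T* + R* R`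
    (hN3 : ∀ v : H3, ∃ (h1 : N3 v ∈ T.adjoint.domain) (h2 : N3 v ∈ R.domain)
      (h3 : T.adjoint ⟨N3 v, h1⟩ ∈ T.domain) (h4 : R ⟨N3 v, h2⟩ ∈ R.adjoint.domain),
      T ⟨T.adjoint ⟨N3 v, h1⟩, h3⟩ + R.adjoint ⟨R ⟨N3 v, h2⟩, h4⟩ = v)
    -- the canonical solution operator `A3 = T* N₃` as a bounded operator
    (A3 : H3 →L[ℂ] H2)
    (hA3 : ∀ v : H3, ∃ h1 : N3 v ∈ T.adjoint.domain, A3 v = T.adjoint ⟨N3 v, h1⟩)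
    (hN2compact : IsCompactOperator N2) :
    IsCompact (closure (A3 ''
      (({v : H3 | ∃ h : v ∈ R.domain, R ⟨v, h⟩ = 0} ∩
        closure {w : H3 | ∃ x : T.domain, T x = w}) ∩ Metric.closedBall 0 1))) := by
  have hN2' : ∀ w, LinearPMap.HasLaplacian S T (N2 w) w := hN2
  have hN3' : ∀ v, LinearPMap.HasLaplacian T R (N3 v) v := hN3
  have hTS' : ∀ x : S.domain, S x ∈ T.ker := fun x => LinearPMap.mem_ker.2 (hTS x)
  have hRT' : ∀ x : T.domain, T x ∈ R.ker := fun x => LinearPMap.mem_ker.2 (hRT x)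
  let B₀ : H2 →ₗ[ℂ] H3 :=
    T.toFun ∘ₗ (N2 : H2 →ₗ[ℂ] H2).codRestrict T.domain fun w => (hN2' w).mem_domain
  have hB₀ : IsCompactOperator B₀ := IsCompactOperator.of_sq_norm_le (N2 : H2 →ₗ[ℂ] H2)
    hN2compact fun w => (hN2' w).norm_sq_le hS_dense hT_dense
  let B : H2 →L[ℂ] H3 := ⟨B₀, hB₀.continuous⟩
  have hB : IsCompactOperator B := hB₀
  have hA3_eq : ∀ v ∈ R.ker, A3 v = B.adjoint v := by
    intro v hv
    obtain ⟨h1, hA3v⟩ := hA3 v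
    obtain ⟨_, _, h3, _, _⟩ := hN3 v
    refine ext_inner_right ℂ fun w => ?_
    rw [ContinuousLinearMap.adjoint_inner_left, hA3v,
      (hN2' w).inner_adjoint_apply hT_dense hTS' _ h3,
      (hN3' v).apply_adjoint_apply_eq_of_mem_ker hR_dense hRT' hv h1 h3]
    rfl
  have himage : A3 '' (({v : H3 | ∃ h : v ∈ R.domain, R ⟨v, h⟩ = 0} ∩
      closure {w : H3 | ∃ x : T.domain, T x = w}) ∩ Metric.closedBall 0 1) ⊆
      B.adjoint '' Metric.closedBall 0 1 := by
    rintro _ ⟨v, ⟨⟨hv, -⟩, hball⟩, rfl⟩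
    exact ⟨v, hball, (hA3_eq v (LinearPMap.mem_ker.2 hv)).symm⟩
  exact (hB.adjoint.isCompact_closure_image_closedBall 1).of_isClosed_subset
    isClosed_closure (closure_mono himage)

/-- Percolation of compactness up the complex: in the Hilbert complex
`H1 →S H2 →T H3 →R H4`, if both Laplacians `□₂ = S S* + T* T` and `□₃ = T T* + R* R`
have bounded inverses `N₂`, `N₃` and `N₂` is compact, then the canonical solution
operator `T* N₃` is compact on `Ker(R) ∩ closure(Ran(T))`. -/
theorem stmt12 {H1 H2 H3 H4 : Type*}
    [NormedAddCommGroup H1] [InnerProductSpace ℂ H1] [CompleteSpace H1]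
    [NormedAddCommGroup H2] [InnerProductSpace ℂ H2] [CompleteSpace H2]
    [NormedAddCommGroup H3] [InnerProductSpace ℂ H3] [CompleteSpace H3]
    [NormedAddCommGroup H4] [InnerProductSpace ℂ H4] [CompleteSpace H4]
    (S : H1 →ₗ.[ℂ] H2) (T : H2 →ₗ.[ℂ] H3) (R : H3 →ₗ.[ℂ] H4)
    (hS_dense : Dense (S.domain : Set H1)) (hT_dense : Dense (T.domain : Set H2))
    (hR_dense : Dense (R.domain : Set H3))
    (hS_closed : S.IsClosed) (hT_closed : T.IsClosed) (hR_closed : R.IsClosed)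
    (hTS : ∀ x : S.domain, ∃ h : S x ∈ T.domain, T ⟨S x, h⟩ = 0)
    (hRT : ∀ x : T.domain, ∃ h : T x ∈ R.domain, R ⟨T x, h⟩ = 0)
    (N2 : H2 →L[ℂ] H2) (N3 : H3 →L[ℂ] H3)
    -- `N₂` is a bounded inverse of `□₂ = S S* + T* T`
    (hN2 : ∀ u : H2, ∃ (h1 : N2 u ∈ S.adjoint.domain) (h2 : N2 u ∈ T.domain)
      (h3 : S.adjoint ⟨N2 u, h1⟩ ∈ S.domain) (h4 : T ⟨N2 u, h2⟩ ∈ T.adjoint.domain),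
      S ⟨S.adjoint ⟨N2 u, h1⟩, h3⟩ + T.adjoint ⟨T ⟨N2 u, h2⟩, h4⟩ = u)
    -- `N₃` is a bounded inverse of `□₃ = T T* + R* R`
    (hN3 : ∀ v : H3, ∃ (h1 : N3 v ∈ T.adjoint.domain) (h2 : N3 v ∈ R.domain)
      (h3 : T.adjoint ⟨N3 v, h1⟩ ∈ T.domain) (h4 : R ⟨N3 v, h2⟩ ∈ R.adjoint.domain),
      T ⟨T.adjoint ⟨N3 v, h1⟩, h3⟩ + R.adjoint ⟨R ⟨N3 v, h2⟩, h4⟩ = v)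
    -- the canonical solution operator `A3 = T* N₃` as a bounded operator
    (A3 : H3 →L[ℂ] H2)
    (hA3 : ∀ v : H3, ∃ h1 : N3 v ∈ T.adjoint.domain, A3 v = T.adjoint ⟨N3 v, h1⟩)
    (hN2compact : IsCompactOperator N2) :
    IsCompact (closure (A3 ''
      (({v : H3 | ∃ h : v ∈ R.domain, R ⟨v, h⟩ = 0} ∩
        closure {w : H3 | ∃ x : T.domain, T x = w}) ∩ Metric.closedBall 0 1))) :=
  stmt12_general S T R hS_dense hT_dense hR_dense hTS hRT N2 N3 hN2 hN3 A3 hA3 hN2compact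
end
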